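/- arXiv:1511.00680 — 3 statements merged into one kernel-verified Lean document; each statement's English description precedes it below -/
import Mathlib

section
/- For the cycle C_n with n ≥ 3, the b-chromatic number satisfies φ(C_4) = 2 and φ(C_n) = 3 for all n ≥ 3 with n ≠ 4. -/
open SimpleGraph

/-- A b-coloring of `G` with `k` colors: a proper coloring such that every color class
contains a vertex adjacent to at least one vertex of every other color class. -/
def IsBColoring {V : Type*} (G : SimpleGraph V) (k : ℕ) (c : V → Fin k) : Prop :=
  (∀ u v, G.Adj u v → c u ≠ c v) ∧
  ∀ i : Fin k, ∃ v, c v = i ∧ ∀ j : Fin k, j ≠ i → ∃ w, G.Adj v w ∧ c w = j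

lemma val_of_sub_one {n : ℕ} (u v : Fin (n+2)) (h : u - v = 1) :
    u.val = v.val + 1 ∨ (v.val = n+1 ∧ u.val = 0) := by
  have h' : u = v + 1 := by rwa [sub_eq_iff_eq_add'] at h
  have hv : u.val = (v.val + 1) % (n+2) := by rw [h']; simp [Fin.add_def]
  rcases Nat.lt_or_ge (v.val + 1) (n+2) with h2 | h2
  · left; rw [hv, Nat.mod_eq_of_lt h2]
  · have h3 : v.val = n + 1 := by omega
    right; refine ⟨h3, ?_⟩; rw [hv, h3]; simp

lemma eq_add_one_of_val {n : ℕ} (a b : Fin (n+2)) (h : b.val = a.val + 1) : b - a = 1 := by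
  have : b = a + 1 := by
    apply Fin.ext
    simp only [Fin.add_def, Fin.val_one]
    rw [Nat.mod_eq_of_lt (by omega : a.val + 1 < n+2)]
    exact h
  rw [this]; exact add_sub_cancel_left a 1

lemma wrap_sub_one {n : ℕ} (a b : Fin (n+2)) (h1 : a.val = 0) (h2 : b.val = n+1) : a - b = 1 := by
  have : a = b + 1 := by
    apply Fin.ext
    simp [Fin.add_def, h1, h2]
  rw [this]; exact add_sub_cancel_left b 1

lemma adj_iff' {n : ℕ} (u v : Fin (n+2)) :
    (cycleGraph (n+2)).Adj u v ↔
      (v.val = u.val + 1 ∨ u.val = v.val + 1 ∨ (u.val = 0 ∧ v.val = n+1) ∨ (v.val = 0 ∧ u.val = n+1)) := by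
  rw [cycleGraph_adj]
  constructor
  · rintro (h | h)
    · rcases val_of_sub_one u v h with h' | ⟨h1, h2⟩
      · right; left; exact h'
      · right; right; left; exact ⟨h2, h1⟩
    · rcases val_of_sub_one v u h with h' | ⟨h1, h2⟩
      · left; exact h'
      · right; right; right; exact ⟨h2, h1⟩
  · rintro (h | h | ⟨h1, h2⟩ | ⟨h1, h2⟩)
    · right; exact eq_add_one_of_val u v h
    · left; exact eq_add_one_of_val v u h
    · left; exact wrap_sub_one u v h1 h2
    · right; exact wrap_sub_one v u h1 h2

lemma exists_bcol (m : ℕ) :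
    ∃ c : Fin (m+5) → Fin 3, IsBColoring (cycleGraph (m+5)) 3 c := by
  refine ⟨fun i => if i.val = m+4 ∧ (m+5) % 3 = 1 then (1 : Fin 3)
      else ⟨i.val % 3, by omega⟩, ?_, ?_⟩
  · intro u v hadj heq
    rw [adj_iff' (n := m+3)] at hadj
    simp only at heq
    split_ifs at heq with h1 h2 h2 <;>
      simp only [Fin.ext_iff, Fin.val_one, Fin.val_mk] at heq <;> omega
  · intro i
    fin_cases i
    · refine ⟨⟨3, by omega⟩, ?_, ?_⟩
      · beta_reduce; rw [if_neg (by simp only [Fin.val_mk]; omega)]; exact Fin.ext (by simp)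
      · intro j hj
        fin_cases j
        · simp at hj
        · exact ⟨⟨4, by omega⟩, by rw [adj_iff' (n := m+3)]; simp; all_goals omega,
            by beta_reduce; rw [if_neg (by simp only [Fin.val_mk]; omega)]; exact Fin.ext (by simp)⟩
        · exact ⟨⟨2, by omega⟩, by rw [adj_iff' (n := m+3)]; simp; all_goals omega,
            by beta_reduce; rw [if_neg (by simp only [Fin.val_mk]; omega)]; exact Fin.ext (by simp)⟩
    · refine ⟨⟨1, by omega⟩, ?_, ?_⟩
      · beta_reduce; rw [if_neg (by simp only [Fin.val_mk]; omega)]; exact Fin.ext (by simp)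
      · intro j hj
        fin_cases j
        · exact ⟨⟨0, by omega⟩, by rw [adj_iff' (n := m+3)]; simp; all_goals omega,
            by beta_reduce; rw [if_neg (by simp only [Fin.val_mk]; omega)]; exact Fin.ext (by simp)⟩
        · simp at hj
        · exact ⟨⟨2, by omega⟩, by rw [adj_iff' (n := m+3)]; simp; all_goals omega,
            by beta_reduce; rw [if_neg (by simp only [Fin.val_mk]; omega)]; exact Fin.ext (by simp)⟩
    · refine ⟨⟨2, by omega⟩, ?_, ?_⟩
      · beta_reduce; rw [if_neg (by simp only [Fin.val_mk]; omega)]; exact Fin.ext (by simp)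
      · intro j hj
        fin_cases j
        · exact ⟨⟨3, by omega⟩, by rw [adj_iff' (n := m+3)]; simp; all_goals omega,
            by beta_reduce; rw [if_neg (by simp only [Fin.val_mk]; omega)]; exact Fin.ext (by simp)⟩
        · exact ⟨⟨1, by omega⟩, by rw [adj_iff' (n := m+3)]; simp; all_goals omega,
            by beta_reduce; rw [if_neg (by simp only [Fin.val_mk]; omega)]; exact Fin.ext (by simp)⟩
        · simp at hj


lemma bcol_le_three {n k : ℕ} (c : Fin (n+2) → Fin k)
    (h : IsBColoring (cycleGraph (n+2)) k c) : k ≤ 3 := by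
  by_contra hk
  push_neg at hk
  obtain ⟨v, _, hb⟩ := h.2 ⟨0, by omega⟩
  have hmem : ∀ w, (cycleGraph (n+2)).Adj v w → w = v - 1 ∨ w = v + 1 := by
    intro w hw
    have : w ∈ (cycleGraph (n+2)).neighborSet v := hw
    rw [cycleGraph_neighborSet] at this
    simpa using this
  obtain ⟨w1, a1, c1⟩ := hb ⟨1, by omega⟩ (by simp [Fin.ext_iff])
  obtain ⟨w2, a2, c2⟩ := hb ⟨2, by omega⟩ (by simp [Fin.ext_iff])
  obtain ⟨w3, a3, c3⟩ := hb ⟨3, by omega⟩ (by simp [Fin.ext_iff])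
  rcases hmem w1 a1 with rfl | rfl <;> rcases hmem w2 a2 with h2 | h2 <;>
    rcases hmem w3 a3 with h3 | h3 <;> subst h2 <;> first
    | (exact absurd (c1.symm.trans c2) (by simp [Fin.ext_iff]))
    | (subst h3; first
        | exact absurd (c1.symm.trans c3) (by simp [Fin.ext_iff])
        | exact absurd (c2.symm.trans c3) (by simp [Fin.ext_iff]))


instance {V : Type*} [Fintype V] [DecidableEq V] (G : SimpleGraph V) [DecidableRel G.Adj]
    (k : ℕ) (c : V → Fin k) : Decidable (IsBColoring G k c) := by
  unfold IsBColoring; infer_instance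

/-- The b-chromatic number of `G`: the largest `k` admitting a b-coloring. -/
noncomputable def bChromatic {V : Type*} (G : SimpleGraph V) : ℕ :=
  sSup {k | ∃ c : V → Fin k, IsBColoring G k c}

/-- φ(C₄) = 2 and φ(Cₙ) = 3 for all n ≥ 3, n ≠ 4. -/
theorem bChromatic_cycleGraph :
    bChromatic (SimpleGraph.cycleGraph 4) = 2 ∧
    ∀ n : ℕ, 3 ≤ n → n ≠ 4 → bChromatic (SimpleGraph.cycleGraph n) = 3 := by
  constructor
  · have h2mem : (2 : ℕ) ∈ {k | ∃ c : Fin 4 → Fin k, IsBColoring (SimpleGraph.cycleGraph 4) k c} :=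
      ⟨![0, 1, 0, 1], by decide⟩
    have no3 : ¬ ∃ c : Fin 4 → Fin 3, IsBColoring (SimpleGraph.cycleGraph 4) 3 c := by decide
    apply le_antisymm
    · refine csSup_le ⟨2, h2mem⟩ (fun k hk => ?_)
      obtain ⟨c, hc⟩ := hk
      have hk3 : k ≤ 3 := bcol_le_three (n := 2) c hc
      by_contra h'
      have : k = 3 := by omega
      subst this
      exact no3 ⟨c, hc⟩
    · exact le_csSup ⟨3, fun k hk => by obtain ⟨c, hc⟩ := hk; exact bcol_le_three (n := 2) c hc⟩
        h2mem
  · intro n hn hne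
    obtain ⟨m, rfl⟩ : ∃ m, n = m + 3 := ⟨n - 3, by omega⟩
    have hmem : (3 : ℕ) ∈
        {k | ∃ c : Fin (m+3) → Fin k, IsBColoring (SimpleGraph.cycleGraph (m+3)) k c} := by
      match m, hne with
      | 0, _ => exact ⟨![0, 1, 2], by decide⟩
      | 1, h => exact absurd rfl h
      | (m+2), _ => exact exists_bcol m
    apply le_antisymm
    · exact csSup_le ⟨3, hmem⟩
        (fun k hk => by obtain ⟨c, hc⟩ := hk; exact bcol_le_three (n := m+1) c hc)
    · exact le_csSup
        ⟨3, fun k hk => by obtain ⟨c, hc⟩ := hk; exact bcol_le_three (n := m+1) c hc⟩ hmem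
end

section
/- For n ≥ 5, the wheel graph W_{n+1} (a cycle C_n plus a universal hub vertex) has b-chromatic number 4. -/
/-- The wheel graph $W_{n+1}$: the cycle $C_n$ (on `some i`) plus a universal hub `none`. -/
def wheelGraph (n : ℕ) : SimpleGraph (Option (Fin n)) where
  Adj x y :=
    match x, y with
    | none, none => False
    | none, some _ => True
    | some _, none => True
    | some a, some b => (SimpleGraph.cycleGraph n).Adj a b
  symm := by
    constructor
    rintro (_ | a) (_ | b) h <;> first | exact h | trivial | exact (SimpleGraph.cycleGraph n).adj_symm h
  loopless := by
    constructor
    rintro (_ | a) h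
    · exact h
    · exact (SimpleGraph.cycleGraph n).irrefl h

open SimpleGraph Finset

section BColoring

variable {V : Type*} {G : SimpleGraph V} {k : ℕ} {c : V → Fin k}

lemma bChromatic_eq (hk : ∃ c : V → Fin k, IsBColoring G k c)
    (hle : ∀ m (c : V → Fin m), IsBColoring G m c → m ≤ k) : bChromatic G = k :=
  IsGreatest.csSup_eq ⟨hk, fun _ ⟨c, hc⟩ => hle _ c hc⟩

lemma le_card_add_one_of_forall_ne_exists_adj {v : V}
    (hv : ∀ j, j ≠ c v → ∃ w, G.Adj v w ∧ c w = j) {s : Finset V}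
    (hs : ∀ w, G.Adj v w → w ∈ s) : k ≤ #s + 1 := by
  classical
  have hcover : (univ : Finset (Fin k)) ⊆ insert (c v) (s.image c) := by
    intro j _
    by_cases hj : j = c v
    · exact hj ▸ mem_insert_self _ _
    · obtain ⟨w, hw, rfl⟩ := hv j hj
      exact mem_insert_of_mem (mem_image_of_mem c (hs w hw))
  calc k = #(univ : Finset (Fin k)) := (card_fin k).symm
    _ ≤ #(insert (c v) (s.image c)) := card_le_card hcover
    _ ≤ #(s.image c) + 1 := card_insert_le _ _
    _ ≤ #s + 1 := by gcongr; exact card_image_le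

end BColoring

section Cone

variable {V : Type*} {G : SimpleGraph V} {H : SimpleGraph (Option V)}

structure IsConeOver (H : SimpleGraph (Option V)) (G : SimpleGraph V) : Prop where
  adj_none_some : ∀ v, H.Adj none (some v)
  adj_some_some : ∀ a b, H.Adj (some a) (some b) ↔ G.Adj a b

def coneColoring {k : ℕ} (c : V → Fin k) : Option V → Fin (k + 1) :=
  fun x => x.elim (Fin.last k) fun v => (c v).castSucc

lemma IsConeOver.isBColoring_coneColoring (hH : IsConeOver H G) {k : ℕ} {c : V → Fin k}
    (hc : IsBColoring G k c) : IsBColoring H (k + 1) (coneColoring c) := by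
  obtain ⟨hproper, hbvertex⟩ := hc
  refine ⟨?_, fun i => ?_⟩
  · rintro (_ | a) (_ | b) hab
    · exact (H.loopless.irrefl _ hab).elim
    · exact (Fin.castSucc_ne_last _).symm
    · exact Fin.castSucc_ne_last _
    · exact fun h => hproper a b ((hH.adj_some_some a b).1 hab) (Fin.castSucc_injective _ h)
  induction i using Fin.lastCases with
  | last =>
    refine ⟨none, rfl, fun j hj => ?_⟩
    obtain ⟨j, rfl⟩ := Fin.exists_castSucc_eq.2 hj
    obtain ⟨v, hv, -⟩ := hbvertex j
    exact ⟨some v, hH.adj_none_some v, congrArg Fin.castSucc hv⟩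
  | cast i =>
    obtain ⟨v, rfl, hv⟩ := hbvertex i
    refine ⟨some v, rfl, fun j hj => ?_⟩
    induction j using Fin.lastCases with
    | last => exact ⟨none, (hH.adj_none_some v).symm, rfl⟩
    | cast j =>
      obtain ⟨w, hvw, rfl⟩ := hv j fun h => hj (congrArg Fin.castSucc h)
      exact ⟨some w, (hH.adj_some_some v w).2 hvw, rfl⟩

lemma IsConeOver.le_of_isBColoring (hH : IsConeOver H G) [G.LocallyFinite] {d : ℕ}
    (hdeg : ∀ a, G.degree a ≤ d) {k : ℕ} {c : Option V → Fin k} (hc : IsBColoring H k c) :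
    k ≤ d + 2 := by
  classical
  rcases Nat.lt_or_ge k 2 with hk | hk
  · omega
  have : Nontrivial (Fin k) := Fin.nontrivial_iff_two_le.2 hk
  obtain ⟨i, hi⟩ := exists_ne (c none)
  obtain ⟨_ | a, rfl, hv⟩ := hc.2 i
  · exact (hi rfl).elim
  have hnbrs : ∀ w, H.Adj (some a) w → w ∈ insert none ((G.neighborFinset a).map .some) := by
    rintro (_ | b) hab
    · exact mem_insert_self _ _
    · exact mem_insert_of_mem (mem_map_of_mem _
        ((mem_neighborFinset _ _ _).2 ((hH.adj_some_some a b).1 hab)))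
  calc k ≤ #(insert none ((G.neighborFinset a).map .some)) + 1 :=
        le_card_add_one_of_forall_ne_exists_adj hv hnbrs
    _ ≤ #((G.neighborFinset a).map .some) + 1 + 1 := by gcongr; exact card_insert_le _ _
    _ ≤ d + 2 := by rw [card_map, card_neighborFinset_eq_degree]; linarith [hdeg a]

end Cone

section Cycle

/-- Along the path `0, 1, 2, …` the colors run `0, 1, 2, 0, 1, 2, 1, 2, …`; the vertices
`1, 2, 3` are b-vertices of the classes `1, 2, 0`. -/
def cycleColor : ℕ → Fin 3
  | 0 => 0
  | 1 => 1
  | 2 => 2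
  | 3 => 0
  | i + 4 => if i % 2 = 0 then 1 else 2

lemma cycleColor_succ_ne (i : ℕ) : cycleColor (i + 1) ≠ cycleColor i := by
  match i with
  | 0 | 1 | 2 | 3 => decide
  | i + 4 =>
    show cycleColor ((i + 1) + 4) ≠ cycleColor (i + 4)
    simp only [cycleColor]
    split_ifs <;> first | decide | omega

lemma cycleColor_ne_zero {i : ℕ} (hi : 4 ≤ i) : cycleColor i ≠ 0 := by
  obtain ⟨i, rfl⟩ := Nat.exists_eq_add_of_le' hi
  simp only [cycleColor]
  split_ifs <;> decide

lemma cycleGraph_adj_mk_succ {n i : ℕ} (hi : i + 1 < n) :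
    (cycleGraph n).Adj ⟨i + 1, hi⟩ ⟨i, by omega⟩ := by
  simp [cycleGraph_adj', Fin.sub_val_of_le]

lemma isBColoring_cycleGraph {n : ℕ} (hn : 5 ≤ n) :
    IsBColoring (cycleGraph n) 3 fun a => cycleColor a.val := by
  obtain ⟨m, rfl⟩ : ∃ m, n = m + 2 := ⟨n - 2, by omega⟩
  have hsucc : ∀ a : Fin (m + 2), cycleColor (a + 1).val ≠ cycleColor a.val := by
    intro a
    rw [Fin.val_add_one]
    split_ifs with ha
    · exact (cycleColor_ne_zero (by simp [ha]; omega)).symm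
    · exact cycleColor_succ_ne a
  refine ⟨fun a b hab => ?_, fun j => ?_⟩
  · rcases cycleGraph_adj.1 hab with h | h
    · rw [sub_eq_iff_eq_add'.1 h]
      exact hsucc b
    · rw [sub_eq_iff_eq_add'.1 h]
      exact (hsucc a).symm
  obtain ⟨i, hi, rfl⟩ : ∃ i < 3, cycleColor (i + 1) = j := by revert j; decide
  have hdistinct : ∀ i < 3, cycleColor i ≠ cycleColor (i + 2) := by decide
  have hthird : ∀ x y z j : Fin 3, x ≠ y → y ≠ z → x ≠ z → j ≠ y → j = x ∨ j = z := by decide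
  refine ⟨⟨i + 1, by omega⟩, rfl, fun j hj => ?_⟩
  rcases hthird _ _ _ j (cycleColor_succ_ne i).symm (cycleColor_succ_ne (i + 1)).symm
      (hdistinct i hi) hj with rfl | rfl
  · exact ⟨⟨i, by omega⟩, cycleGraph_adj_mk_succ (by omega), rfl⟩
  · exact ⟨⟨i + 2, by omega⟩, (cycleGraph_adj_mk_succ (by omega)).symm, rfl⟩

end Cycle

/-- For $n ≥ 5$, the wheel $W_{n+1}$ has b-chromatic number 4. -/
theorem bChromatic_wheelGraph (n : ℕ) (hn : 5 ≤ n) :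
    bChromatic (wheelGraph n) = 4 := by
  obtain ⟨m, rfl⟩ : ∃ m, n = m + 3 := ⟨n - 3, by omega⟩
  have hcone : IsConeOver (wheelGraph (m + 3)) (cycleGraph (m + 3)) :=
    ⟨fun _ => trivial, fun _ _ => Iff.rfl⟩
  exact bChromatic_eq ⟨_, hcone.isBColoring_coneColoring (isBColoring_cycleGraph hn)⟩
    fun _ _ hc => hcone.le_of_isBColoring (fun _ => cycleGraph_degree_three_le.le) hc
end

section
/- If a graph G has a universal vertex u (adjacent to all other vertices) and G − u is not empty and G is not a path on at most 3 vertices, then φ(G) ≥ φ(G − u) + 1. -/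
/-!
A b-coloring always exists: in a coloring with the fewest colors every color class has a
vertex seeing all other colors, since otherwise that class could be recolored away. Given a
b-coloring of `G - u` with `φ(G - u)` colors, giving the universal vertex `u` a fresh color
yields a b-coloring of `G`: `u` sees every old color, and every old b-vertex also sees `u`.
-/

namespace SimpleGraph

variable {V : Type*} (G : SimpleGraph V)

lemma isBColoring_of_forall_lt_not_colorable {k : ℕ} (C : G.Coloring (Fin k))
    (hk : ∀ n < k, ¬ G.Colorable n) : IsBColoring G k C := by
  refine ⟨fun _ _ hadj => C.valid hadj, fun i => ?_⟩
  by_contra! hmiss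
  choose j hji hj using hmiss
  let recolor : G.Coloring {j : Fin k // j ≠ i} := Coloring.mk
    (fun v => if hv : C v = i then ⟨j v hv, hji v hv⟩ else ⟨C v, hv⟩)
    (fun {v w} hvw => by
      by_cases hv : C v = i <;> by_cases hw : C w = i <;>
        simp only [hv, hw, dite_true, dite_false, ne_eq, Subtype.mk.injEq]
      · exact absurd (hv.trans hw.symm) (C.valid hvw)
      · exact fun h => hj v hv w hvw h.symm
      · exact hj w hw v hvw.symm
      · exact C.valid hvw)
  have hk_pos : k - 1 < k := by have := i.pos; omega
  exact hk (k - 1) hk_pos (by simpa [Fintype.card_subtype_compl] using recolor.colorable)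

lemma exists_isBColoring [Finite V] : ∃ k, ∃ c : V → Fin k, IsBColoring G k c := by
  classical
  have hcol : ∃ n, G.Colorable n := by
    have := Fintype.ofFinite V
    exact ⟨_, G.colorable_of_fintype⟩
  obtain ⟨C⟩ := Nat.find_spec hcol
  exact ⟨_, C, G.isBColoring_of_forall_lt_not_colorable C fun _ => Nat.find_min hcol⟩

end SimpleGraph

namespace IsBColoring

variable {V : Type*} {G : SimpleGraph V} {k : ℕ} {c : V → Fin k}

lemma le_card [Finite V] (hc : IsBColoring G k c) : k ≤ Nat.card V := by
  choose b hb _ using hc.2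
  have hb_inj : Function.Injective b := fun i j hij => by rw [← hb i, ← hb j, hij]
  simpa using Nat.card_le_card_of_injective b hb_inj

lemma le_bChromatic [Finite V] (hc : IsBColoring G k c) : k ≤ bChromatic G :=
  le_csSup ⟨Nat.card V, fun _ ⟨_, hc'⟩ => hc'.le_card⟩ ⟨c, hc⟩

end IsBColoring

lemma exists_isBColoring_bChromatic {V : Type*} [Finite V] (G : SimpleGraph V) :
    ∃ c : V → Fin (bChromatic G), IsBColoring G (bChromatic G) c :=
  Nat.sSup_mem G.exists_isBColoring ⟨Nat.card V, fun _ ⟨_, hc⟩ => hc.le_card⟩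

section UniversalVertex

variable {V : Type*} [DecidableEq V] {k : ℕ}

def extendColoringAt (u : V) (c : {v : V | v ≠ u} → Fin k) (v : V) : Fin (k + 1) :=
  if h : v = u then Fin.last k else (c ⟨v, h⟩).castSucc

@[simp]
lemma extendColoringAt_self {u : V} (c : {v : V | v ≠ u} → Fin k) :
    extendColoringAt u c u = Fin.last k :=
  dif_pos rfl

lemma extendColoringAt_of_ne {u : V} (c : {v : V | v ≠ u} → Fin k) {v : V} (hv : v ≠ u) :
    extendColoringAt u c v = (c ⟨v, hv⟩).castSucc :=
  dif_neg hv

lemma isBColoring_extendColoringAt {G : SimpleGraph V} {u : V} (hu : ∀ w, w ≠ u → G.Adj u w)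
    {c : {v : V | v ≠ u} → Fin k} (hc : IsBColoring (G.induce {v | v ≠ u}) k c) :
    IsBColoring G (k + 1) (extendColoringAt u c) := by
  have hcolor : ∀ v : {v : V | v ≠ u}, extendColoringAt u c v = (c v).castSucc := fun v =>
    extendColoringAt_of_ne c v.2
  refine ⟨fun v w hvw => ?_, fun i => ?_⟩
  · by_cases hv : v = u <;> by_cases hw : w = u
    · exact absurd (hv.trans hw.symm) hvw.ne
    · rw [hv, extendColoringAt_self, extendColoringAt_of_ne c hw]
      exact (Fin.castSucc_lt_last _).ne'
    · rw [hw, extendColoringAt_self, extendColoringAt_of_ne c hv]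
      exact (Fin.castSucc_lt_last _).ne
    · rw [extendColoringAt_of_ne c hv, extendColoringAt_of_ne c hw]
      exact fun h => hc.1 ⟨v, hv⟩ ⟨w, hw⟩ hvw (Fin.castSucc_injective _ h)
  induction i using Fin.lastCases with
  | last =>
    refine ⟨u, extendColoringAt_self c, fun j hj => ?_⟩
    obtain ⟨j, rfl⟩ := Fin.exists_castSucc_eq.2 hj
    obtain ⟨v, hv, -⟩ := hc.2 j
    exact ⟨v, hu v v.2, by rw [hcolor, hv]⟩
  | cast i =>
    obtain ⟨v, hv, hsees⟩ := hc.2 i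
    refine ⟨v, by rw [hcolor, hv], fun j hj => ?_⟩
    induction j using Fin.lastCases with
    | last => exact ⟨u, (hu v v.2).symm, extendColoringAt_self c⟩
    | cast j =>
      obtain ⟨w, hvw, hw⟩ := hsees j (fun h => hj (congrArg _ h))
      exact ⟨w, hvw, by rw [hcolor, hw]⟩

end UniversalVertex

theorem bChromatic_of_universal_vertex_general {V : Type*} [Fintype V]
    (G : SimpleGraph V) (u : V) (huniv : ∀ w : V, w ≠ u → G.Adj u w) :
    bChromatic (G.induce {v : V | v ≠ u}) + 1 ≤ bChromatic G := by
  classical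
  obtain ⟨c, hc⟩ := exists_isBColoring_bChromatic (G.induce {v : V | v ≠ u})
  exact (isBColoring_extendColoringAt huniv hc).le_bChromatic

/-- If $G$ has a universal vertex $u$, $G - u$ is nonempty, and $G$ is not a path on at
most 3 vertices, then $φ(G) ≥ φ(G - u) + 1$. -/
theorem bChromatic_of_universal_vertex {V : Type*} [Fintype V] [DecidableEq V]
    (G : SimpleGraph V) (u : V) (huniv : ∀ w : V, w ≠ u → G.Adj u w)
    (hne : ∃ w : V, w ≠ u)
    (hnp : ¬ ∃ m : ℕ, m ≤ 3 ∧ Nonempty (G ≃g SimpleGraph.pathGraph m)) :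
    bChromatic (G.induce {v : V | v ≠ u}) + 1 ≤ bChromatic G :=
  bChromatic_of_universal_vertex_general G u huniv
end
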